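/- Let G be an infinite, locally finite, connected undirected graph with a geodesic γ = (v_i)_{i≥0} starting at v = v_0. Then for every n ≥ 1, σ_n(v) ≤ Σ_{L=0}^n Σ_{k=L}^n σ^B_k(v_L) · σ^B_{n-k}(v_L), where σ^B_k(u) denotes the number of backward extendable k-step SAWs from u. -/

import Mathlib

open Filter ENNReal

structure Dgraph where
  V : Type
  E : Type
  src : E → V
  tgt : E → V

namespace Dgraph

variable (G : Dgraph)

/-- Every vertex has finite in-degree and out-degree. -/
def LocallyFinite : Prop :=
  ∀ v : G.V, {e : G.E | G.src e = v}.Finite ∧ {e : G.E | G.tgt e = v}.Finite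

/-- There is a directed edge from `u` to `v`. -/
def Adj (u v : G.V) : Prop := ∃ e : G.E, G.src e = u ∧ G.tgt e = v

/-- Directed walks exist between any ordered pair of vertices. -/
def StronglyConnected : Prop := ∀ u v : G.V, Relation.ReflTransGen G.Adj u v

/-- An automorphism of a directed multigraph. -/
structure Aut where
  vmap : G.V ≃ G.V
  emap : G.E ≃ G.E
  src_eq : ∀ e, G.src (emap e) = vmap (G.src e)
  tgt_eq : ∀ e, G.tgt (emap e) = vmap (G.tgt e)

/-- `u` and `v` are in the same transitivity class. -/
def SameOrbit (u v : G.V) : Prop := ∃ φ : G.Aut, φ.vmap u = v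

/-- Finitely many transitivity classes. -/
def QuasiTransitive : Prop := ∃ S : Finset G.V, ∀ v : G.V, ∃ s ∈ S, G.SameOrbit s v

def VertexTransitive : Prop := ∀ u v : G.V, G.SameOrbit u v

/-- The orbit of `v` under the stabiliser of `u`. -/
def stabOrbit (u v : G.V) : Set G.V := {w | ∃ φ : G.Aut, φ.vmap u = u ∧ φ.vmap v = w}

/-- Unimodularity: the weight function is constant on transitivity classes,
equivalently `|stab(u)v| = |stab(v)u|` whenever `u, v` are in the same orbit. -/
def Unimodular : Prop := ∀ u v : G.V, G.SameOrbit u v →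
  Nat.card (G.stabOrbit u v) = Nat.card (G.stabOrbit v u)

/-- The edge-reversal of `G`. -/
def rev : Dgraph := ⟨G.V, G.E, G.tgt, G.src⟩

/-- Each edge has a reverse edge: `G` represents an undirected graph. -/
def Undirected : Prop := ∃ ι : G.E ≃ G.E, ∀ e : G.E,
  G.src (ι e) = G.tgt e ∧ G.tgt (ι e) = G.src e ∧ ι (ι e) = e

/-- An `n`-step self-avoiding walk starting at `v`, directed away from `v`. -/
@[ext]
structure SAW (n : ℕ) (v : G.V) where
  vs : Fin (n + 1) → G.V
  es : Fin n → G.E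
  hsrc : ∀ i : Fin n, G.src (es i) = vs i.castSucc
  htgt : ∀ i : Fin n, G.tgt (es i) = vs i.succ
  hstart : vs 0 = v
  hinj : Function.Injective vs

/-- `w` is an initial segment of a singly infinite SAW from `v`. -/
def IsFwdExt {n : ℕ} {v : G.V} (w : G.SAW n v) : Prop :=
  ∃ (vs : ℕ → G.V) (es : ℕ → G.E), Function.Injective vs ∧
    (∀ i : ℕ, G.src (es i) = vs i ∧ G.tgt (es i) = vs (i + 1)) ∧
    (∀ i : Fin (n + 1), vs i = w.vs i) ∧ (∀ i : Fin n, es i = w.es i)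

/-- `w` is the final segment of a singly infinite SAW from infinity ending at the
endpoint of `w` (indexed backwards from the endpoint). -/
def IsBwdExt {n : ℕ} {v : G.V} (w : G.SAW n v) : Prop :=
  ∃ (vs : ℕ → G.V) (es : ℕ → G.E), Function.Injective vs ∧
    (∀ i : ℕ, G.src (es i) = vs (i + 1) ∧ G.tgt (es i) = vs i) ∧
    (∀ i : Fin (n + 1), vs (n - (i : ℕ)) = w.vs i) ∧
    (∀ i : Fin n, es (n - 1 - (i : ℕ)) = w.es i)

/-- `w` is a sub-walk of a doubly infinite SAW. -/
def IsDblExt {n : ℕ} {v : G.V} (w : G.SAW n v) : Prop :=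
  ∃ (vs : ℤ → G.V) (es : ℤ → G.E), Function.Injective vs ∧
    (∀ i : ℤ, G.src (es i) = vs i ∧ G.tgt (es i) = vs (i + 1)) ∧
    ∃ k : ℤ, (∀ i : Fin (n + 1), vs (k + (i : ℕ)) = w.vs i) ∧
      (∀ i : Fin n, es (k + (i : ℕ)) = w.es i)

noncomputable def sigma (n : ℕ) (v : G.V) : ℕ := Nat.card (G.SAW n v)
noncomputable def sigmaF (n : ℕ) (v : G.V) : ℕ := Nat.card {w : G.SAW n v // G.IsFwdExt w}
noncomputable def sigmaB (n : ℕ) (v : G.V) : ℕ := Nat.card {w : G.SAW n v // G.IsBwdExt w}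
noncomputable def sigmaFB (n : ℕ) (v : G.V) : ℕ := Nat.card {w : G.SAW n v // G.IsDblExt w}

noncomputable def ssigma (n : ℕ) : ℝ≥0∞ := ⨆ v : G.V, (G.sigma n v : ℝ≥0∞)
noncomputable def ssigmaF (n : ℕ) : ℝ≥0∞ := ⨆ v : G.V, (G.sigmaF n v : ℝ≥0∞)
noncomputable def ssigmaB (n : ℕ) : ℝ≥0∞ := ⨆ v : G.V, (G.sigmaB n v : ℝ≥0∞)
noncomputable def ssigmaFB (n : ℕ) : ℝ≥0∞ := ⨆ v : G.V, (G.sigmaFB n v : ℝ≥0∞)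

/-- Undirected graph distance: length of a shortest path ignoring orientations. -/
noncomputable def udist (u v : G.V) : ℕ :=
  sInf {n : ℕ | ∃ f : Fin (n + 1) → G.V, f 0 = u ∧ f (Fin.last n) = v ∧
    ∀ i : Fin n, (∃ e, G.src e = f i.castSucc ∧ G.tgt e = f i.succ) ∨
      (∃ e, G.src e = f i.succ ∧ G.tgt e = f i.castSucc)}

end Dgraph

open Filter ENNReal

attribute [local instance] Classical.propDecidable

/-!
Cut a SAW `w` from `γ 0` at its visit to `γ L`, the last vertex of `γ` it meets; since `γ` is a
geodesic this visit happens at some step `k` with `L ≤ k ≤ n`. The reversed initial piece and the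
final piece both start at `γ L` and avoid `γ (L + 1), γ (L + 2), …`, so each is backward
extendable by the reversed tail of `γ`. The two pieces determine `w`, hence at most
`σ^B_k(γ L) σ^B_{n-k}(γ L)` SAWs are cut at a given `(L, k)`.
-/

namespace Dgraph

variable {G : Dgraph}

namespace SAW

variable {n : ℕ} {v u : G.V}

def init (w : G.SAW (n + 1) v) : G.SAW n v where
  vs := w.vs ∘ Fin.castSucc
  es := w.es ∘ Fin.castSucc
  hsrc i := w.hsrc i.castSucc
  htgt i := w.htgt i.castSucc
  hstart := w.hstart
  hinj := w.hinj.comp (Fin.castSucc_injective _)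

theorem ext_of_init_eq {w w' : G.SAW (n + 1) v} (hinit : w.init = w'.init)
    (hlast : w.es (Fin.last n) = w'.es (Fin.last n)) : w = w' := by
  have hvs : ∀ i : Fin (n + 1), w.vs i.castSucc = w'.vs i.castSucc :=
    congrFun (congrArg SAW.vs hinit)
  have hes : ∀ i : Fin n, w.es i.castSucc = w'.es i.castSucc :=
    congrFun (congrArg SAW.es hinit)
  ext i
  · rcases Fin.eq_castSucc_or_eq_last i with ⟨j, rfl⟩ | rfl
    · exact hvs j
    · rw [← Fin.succ_last, ← w.htgt, ← w'.htgt, hlast]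
  · rcases Fin.eq_castSucc_or_eq_last i with ⟨j, rfl⟩ | rfl
    · exact hes j
    · exact hlast

/-- The first `k` steps of `w` walked backwards, with `ι` reversing each edge. -/
def reverseTake (ι : G.E ≃ G.E) (hι : ∀ e, G.src (ι e) = G.tgt e ∧ G.tgt (ι e) = G.src e)
    (w : G.SAW n v) (k : ℕ) (hk : k < n + 1) (hu : w.vs ⟨k, hk⟩ = u) : G.SAW k u where
  vs i := w.vs ⟨k - i, by omega⟩
  es i := ι (w.es ⟨k - 1 - i, by omega⟩)
  hsrc i := by
    rw [(hι _).1, w.htgt]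
    exact congrArg w.vs (Fin.ext (by simp; omega))
  htgt i := by
    rw [(hι _).2, w.hsrc]
    exact congrArg w.vs (Fin.ext (by simp; omega))
  hstart := hu
  hinj i j h := Fin.ext (by have := congrArg Fin.val (w.hinj h); simp at this; omega)

def drop (w : G.SAW n v) (k : ℕ) (hk : k < n + 1) (hu : w.vs ⟨k, hk⟩ = u) :
    G.SAW (n - k) u where
  vs i := w.vs ⟨k + i, by omega⟩
  es i := w.es ⟨k + i, by omega⟩
  hsrc i := (w.hsrc _).trans (congrArg w.vs (Fin.ext rfl))
  htgt i := (w.htgt _).trans (congrArg w.vs (Fin.ext (by simp; omega)))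
  hstart := hu
  hinj i j h := Fin.ext (by have := congrArg Fin.val (w.hinj h); simp at this; omega)

variable {ι : G.E ≃ G.E} {hι : ∀ e, G.src (ι e) = G.tgt e ∧ G.tgt (ι e) = G.src e}
  {k : ℕ} {hk : k < n + 1}

theorem range_reverseTake_subset (w : G.SAW n v) (hu : w.vs ⟨k, hk⟩ = u) :
    Set.range (w.reverseTake ι hι k hk hu).vs ⊆ Set.range w.vs := by
  rintro _ ⟨i, rfl⟩
  exact ⟨_, rfl⟩

theorem range_drop_subset (w : G.SAW n v) (hu : w.vs ⟨k, hk⟩ = u) :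
    Set.range (w.drop k hk hu).vs ⊆ Set.range w.vs := by
  rintro _ ⟨i, rfl⟩
  exact ⟨_, rfl⟩

theorem eq_of_reverseTake_eq_of_drop_eq {w w' : G.SAW n v} (hu : w.vs ⟨k, hk⟩ = u)
    (hu' : w'.vs ⟨k, hk⟩ = u)
    (htake : w.reverseTake ι hι k hk hu = w'.reverseTake ι hι k hk hu')
    (hdrop : w.drop k hk hu = w'.drop k hk hu') : w = w' := by
  have htake_vs := congrArg SAW.vs htake
  have htake_es := congrArg SAW.es htake
  have hdrop_vs := congrArg SAW.vs hdrop
  have hdrop_es := congrArg SAW.es hdrop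
  simp only [reverseTake, drop, funext_iff] at htake_vs htake_es hdrop_vs hdrop_es
  ext i
  · by_cases hik : (i : ℕ) ≤ k
    · simpa [Nat.sub_sub_self hik] using htake_vs ⟨k - i, by omega⟩
    · simpa [Nat.add_sub_cancel' (by omega : k ≤ i)] using hdrop_vs ⟨i - k, by omega⟩
  · by_cases hik : (i : ℕ) < k
    · have hidx : k - 1 - (k - 1 - i) = (i : ℕ) := by omega
      exact ι.injective (by simpa [hidx] using htake_es ⟨k - 1 - i, by omega⟩)
    · simpa [Nat.add_sub_cancel' (by omega : k ≤ i)] using hdrop_es ⟨i - k, by omega⟩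

end SAW

theorem LocallyFinite.finite_SAW (hlf : G.LocallyFinite) (n : ℕ) (v : G.V) :
    Finite (G.SAW n v) := by
  induction n generalizing v with
  | zero =>
    refine @Finite.of_subsingleton _ ⟨fun a b => ?_⟩
    ext i
    · rw [Fin.fin_one_eq_zero i, a.hstart, b.hstart]
    · exact i.elim0
  | succ n ih =>
    have : ∀ w : G.SAW n v, Finite {e : G.E // G.src e = w.vs (Fin.last n)} :=
      fun w => (hlf _).1.to_subtype
    refine Finite.of_injective
      (fun w : G.SAW (n + 1) v => (⟨w.init, w.es (Fin.last n), w.hsrc _⟩ :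
        Σ w : G.SAW n v, {e : G.E // G.src e = w.vs (Fin.last n)})) fun a b hab => ?_
    obtain ⟨hinit, hlast⟩ := Sigma.mk.inj_iff.mp hab
    exact SAW.ext_of_init_eq hinit ((Subtype.heq_iff_coe_eq fun _ => by rw [hinit]).mp hlast)

theorem Undirected.adj_symm (hund : G.Undirected) {u v : G.V} (h : G.Adj u v) : G.Adj v u :=
  have ⟨ι, hι⟩ := hund
  have ⟨e, he⟩ := h
  ⟨ι e, by rw [(hι e).1, he.2], by rw [(hι e).2.1, he.1]⟩

def IsBwdRay (r : ℕ → G.V) : Prop := Function.Injective r ∧ ∀ t, G.Adj (r (t + 1)) (r t)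

theorem IsBwdRay.isBwdExt {r : ℕ → G.V} (hr : G.IsBwdRay r) {m : ℕ} (w : G.SAW m (r 0))
    (hdisj : ∀ t, 0 < t → r t ∉ Set.range w.vs) : G.IsBwdExt w := by
  choose e he using hr.2
  refine ⟨fun j => if j ≤ m then w.vs ⟨m - j, by omega⟩ else r (j - m),
    fun j => if h : j < m then w.es ⟨m - 1 - j, by omega⟩ else e (j - m), ?_, ?_, ?_, ?_⟩
  · intro a b hab
    dsimp only at hab
    split_ifs at hab with ha hb hb
    · have := congrArg Fin.val (w.hinj hab); simp at this; omega
    · exact absurd ⟨_, hab⟩ (hdisj _ (by omega))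
    · exact absurd ⟨_, hab.symm⟩ (hdisj _ (by omega))
    · have := hr.1 hab; omega
  · intro j
    by_cases hj : j < m
    · simp only [dif_pos hj, w.hsrc, w.htgt, if_pos hj.le, if_pos (Nat.succ_le_of_lt hj)]
      exact ⟨congrArg w.vs (Fin.ext (by simp; omega)), congrArg w.vs (Fin.ext (by simp; omega))⟩
    · simp only [dif_neg hj, if_neg (by omega : ¬ j + 1 ≤ m), (he _).1, (he _).2]
      refine ⟨congrArg r (by omega), ?_⟩
      split_ifs with hjm
      · obtain rfl : j = m := by omega
        simp [← w.hstart]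
      · rfl
  · intro i
    simp only [if_pos (Nat.sub_le m i)]
    exact congrArg w.vs (Fin.ext (by simp; omega))
  · intro i
    simp only [dif_pos (by omega : m - 1 - (i : ℕ) < m)]
    exact congrArg w.es (Fin.ext (by simp; omega))

theorem isBwdRay_of_forall_adj (hsymm : ∀ u v, G.Adj u v → G.Adj v u) {γ : ℕ → G.V}
    (hγ : Function.Injective γ) (hadj : ∀ i, G.Adj (γ i) (γ (i + 1))) (L : ℕ) :
    G.IsBwdRay fun t => γ (L + t) :=
  ⟨hγ.comp (add_right_injective L), fun t => hsymm _ _ (hadj (L + t))⟩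

def SAW.MeetsRayOnlyAt {n : ℕ} {v : G.V} (w : G.SAW n v) (r : ℕ → G.V) (k : ℕ) : Prop :=
  ∃ hk : k < n + 1, w.vs ⟨k, hk⟩ = r 0 ∧ ∀ t, 0 < t → r t ∉ Set.range w.vs

theorem card_meetsRayOnlyAt_le (hlf : G.LocallyFinite) (hund : G.Undirected) {r : ℕ → G.V}
    (hr : G.IsBwdRay r) (n k : ℕ) (v : G.V) :
    Nat.card {w : G.SAW n v // w.MeetsRayOnlyAt r k} ≤
      G.sigmaB k (r 0) * G.sigmaB (n - k) (r 0) := by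
  obtain ⟨ι, hι⟩ := hund
  replace hι e : G.src (ι e) = G.tgt e ∧ G.tgt (ι e) = G.src e := ⟨(hι e).1, (hι e).2.1⟩
  have := hlf.finite_SAW k (r 0)
  have := hlf.finite_SAW (n - k) (r 0)
  let split (w : {w : G.SAW n v // w.MeetsRayOnlyAt r k}) :
      {u : G.SAW k (r 0) // G.IsBwdExt u} × {u : G.SAW (n - k) (r 0) // G.IsBwdExt u} :=
    (⟨_, hr.isBwdExt (w.1.reverseTake ι hι k w.2.1 w.2.2.1)
        fun t ht hmem => w.2.2.2 t ht (SAW.range_reverseTake_subset _ _ hmem)⟩,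
      ⟨_, hr.isBwdExt (w.1.drop k w.2.1 w.2.2.1)
        fun t ht hmem => w.2.2.2 t ht (SAW.range_drop_subset _ _ hmem)⟩)
  refine (Nat.card_le_card_of_injective split fun a b hab => ?_).trans (Nat.card_prod _ _).le
  simp only [split, Prod.mk.injEq, Subtype.mk.injEq] at hab
  exact Subtype.ext (SAW.eq_of_reverseTake_eq_of_drop_eq _ _ hab.1 hab.2)

theorem udist_self (u : G.V) : G.udist u u = 0 :=
  Nat.eq_zero_of_le_zero <| Nat.sInf_le ⟨fun _ => u, rfl, rfl, fun i => i.elim0⟩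

theorem udist_le_of_SAW {n : ℕ} {v : G.V} (w : G.SAW n v) (j : Fin (n + 1)) :
    G.udist v (w.vs j) ≤ j := by
  refine Nat.sInf_le ⟨fun t => w.vs ⟨t, by omega⟩, (congrArg w.vs (Fin.ext rfl)).trans w.hstart,
    congrArg w.vs (Fin.ext rfl), fun t => Or.inl ⟨w.es ⟨t, by omega⟩, ?_, ?_⟩⟩
  · exact (w.hsrc _).trans (congrArg w.vs (Fin.ext rfl))
  · exact (w.htgt _).trans (congrArg w.vs (Fin.ext rfl))

theorem exists_meetsRayOnlyAt {γ : ℕ → G.V} (hgeo : ∀ i, G.udist (γ 0) (γ i) = i) {n : ℕ}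
    (w : G.SAW n (γ 0)) :
    ∃ L ≤ n, ∃ k, L ≤ k ∧ k ≤ n ∧ w.MeetsRayOnlyAt (fun t => γ (L + t)) k := by
  let visited i := γ i ∈ Set.range w.vs
  have hbound : ∀ i, visited i → i ≤ n := by
    rintro i ⟨j, hj⟩
    have := G.udist_le_of_SAW w j
    rw [hj, hgeo] at this
    omega
  set L := Nat.findGreatest visited n
  obtain ⟨j, hj⟩ : visited L := Nat.findGreatest_spec (Nat.zero_le n) ⟨0, w.hstart⟩
  have hLj : L ≤ j := by
    have := G.udist_le_of_SAW w j
    rwa [hj, hgeo] at this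
  refine ⟨L, Nat.findGreatest_le n, j, hLj, by omega, j.isLt, hj, fun t ht hmem => ?_⟩
  exact Nat.findGreatest_is_greatest (P := visited) (by omega) (hbound _ hmem) hmem

end Dgraph

theorem sigma_le_geodesic_decomposition_general (G : Dgraph)
    (hlf : G.LocallyFinite) (hund : G.Undirected)
    (γ : ℕ → G.V) (hadj : ∀ i : ℕ, G.Adj (γ i) (γ (i + 1)))
    (hgeo : ∀ i j : ℕ, G.udist (γ i) (γ j) = ((i : ℤ) - (j : ℤ)).natAbs)
    (n : ℕ) :
    G.sigma n (γ 0) ≤ ∑ L ∈ Finset.range (n + 1), ∑ k ∈ Finset.Icc L n,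
      G.sigmaB k (γ L) * G.sigmaB (n - k) (γ L) := by
  have hγ : Function.Injective γ := fun i j h => by
    have := hgeo i j
    rw [h, G.udist_self] at this
    omega
  have := hlf.finite_SAW n (γ 0)
  have := Fintype.ofFinite (G.SAW n (γ 0))
  let B := (Finset.range (n + 1)).sigma fun L => Finset.Icc L n
  let fiber (p : Σ _ : ℕ, ℕ) : Finset (G.SAW n (γ 0)) :=
    Finset.univ.filter (·.MeetsRayOnlyAt (fun t => γ (p.1 + t)) p.2)
  have hcover : Finset.univ ⊆ B.biUnion fiber := by
    intro w _
    obtain ⟨L, hL, k, hLk, hkn, hw⟩ :=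
      Dgraph.exists_meetsRayOnlyAt (fun i => by simpa using hgeo 0 i) w
    simp only [B, fiber, Finset.mem_biUnion, Finset.mem_sigma, Finset.mem_range, Finset.mem_Icc,
      Finset.mem_filter, Finset.mem_univ, true_and]
    exact ⟨⟨L, k⟩, ⟨Nat.lt_succ_of_le hL, hLk, hkn⟩, hw⟩
  calc G.sigma n (γ 0) = (Finset.univ : Finset (G.SAW n (γ 0))).card := by
        rw [Dgraph.sigma, Nat.card_eq_fintype_card, Finset.card_univ]
  _ ≤ ∑ p ∈ B, (fiber p).card :=
      (Finset.card_le_card hcover).trans Finset.card_biUnion_le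
  _ ≤ ∑ p ∈ B, G.sigmaB p.2 (γ p.1) * G.sigmaB (n - p.2) (γ p.1) :=
      Finset.sum_le_sum fun p _ => by
        rw [← Fintype.card_subtype, ← Nat.card_eq_fintype_card]
        exact Dgraph.card_meetsRayOnlyAt_le hlf hund
          (Dgraph.isBwdRay_of_forall_adj (fun _ _ => hund.adj_symm) hγ hadj p.1) n p.2 (γ 0)
  _ = _ := Finset.sum_sigma _ _ _

/-- decomposition of SAWs along a geodesic ray: if `γ` is a geodesic with
`γ 0 = v` then `σ_n(v) ≤ Σ_{L=0}^n Σ_{k=L}^n σ^B_k(γ L) · σ^B_{n-k}(γ L)`. -/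
theorem sigma_le_geodesic_decomposition (G : Dgraph) (hinf : Infinite G.V)
    (hlf : G.LocallyFinite) (hund : G.Undirected) (hsc : G.StronglyConnected)
    (γ : ℕ → G.V) (hadj : ∀ i : ℕ, G.Adj (γ i) (γ (i + 1)))
    (hgeo : ∀ i j : ℕ, G.udist (γ i) (γ j) = ((i : ℤ) - (j : ℤ)).natAbs)
    (n : ℕ) (hn : 1 ≤ n) :
    G.sigma n (γ 0) ≤ ∑ L ∈ Finset.range (n + 1), ∑ k ∈ Finset.Icc L n,
      G.sigmaB k (γ L) * G.sigmaB (n - k) (γ L) :=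
  sigma_le_geodesic_decomposition_general G hlf hund γ hadj hgeo n
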